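/- Let G = (V,E) be the directed spanner instance built from a projection games instance in which every vertex of L has degree exactly K ≥ 1, with parameter k ≥ 2. Then for every {c_i,x_j} ∈ E_Proj and every l ∈ [kK|Σ|], the directed paths in G from c_i^l to x_j^l with at most 2k−1 edges are exactly the following: (a) the single-edge path consisting of the edge (c_i^l, x_j^l); and (b) for each (σL,σR) ∈ π_{i,j}, the path of exactly 2k−1 edges consisting of the edge (c_i^l, c_{i,σL}), followed by the path E_M^{i,j,σL,σR}, followed by the edge (x_{j,σR}, x_j^l). -/

import Mathlib

open Finset

/-- A directed path in the graph with edge set `E`, from `u` to `v`, given as its (nonempty)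
list of edges: consecutive edges are incident, the first edge starts at `u`, the last edge ends
at `v`, and no vertex is visited twice. -/
def IsDirPath {V : Type*} [DecidableEq V] (E : Finset (V × V)) (u v : V)
    (p : List (V × V)) : Prop :=
  p ≠ [] ∧ (∀ e ∈ p, e ∈ E) ∧ Option.map Prod.fst p.head? = some u ∧
    Option.map Prod.snd p.getLast? = some v ∧
    List.Chain' (fun e f => e.2 = f.1) p ∧ (u :: p.map Prod.snd).Nodup

/-- `z ∈ Z^{u,v}` (with respect to stretch `t`): a fractional cut against the stretch-`t`
paths from `u` to `v`, i.e. `z : E → [0,1]` with `∑_{e ∈ P} z e ≥ 1` for every path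
`P ∈ 𝒫_{u,v}` (at most `t` edges). -/
def InZ {V : Type*} [DecidableEq V] (E : Finset (V × V)) (t : ℕ) (u v : V)
    (z : V × V → ℝ) : Prop :=
  (∀ e ∈ E, 0 ≤ z e ∧ z e ≤ 1) ∧
  ∀ p : List (V × V), IsDirPath E u v p → p.length ≤ t → 1 ≤ (p.map z).sum

/-- A `t`-spanner of the directed graph with edge set `E`: a subset `S ⊆ E` such that every
edge `(u,v) ∈ E` is spanned by a directed path from `u` to `v` of at most `t` edges,
all belonging to `S`. -/
def IsSpanner {V : Type*} [DecidableEq V] (E S : Finset (V × V)) (t : ℕ) : Prop :=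
  S ⊆ E ∧ ∀ e ∈ E, ∃ p : List (V × V), IsDirPath S e.1 e.2 p ∧ p.length ≤ t

/-- The moment matrix `(y_{I ∪ J})`, indexed by the subsets `I, J ⊆ E` with `|I|, |J| ≤ r`. -/
def momentMatrixE {α : Type*} [Fintype α] [DecidableEq α] (E : Finset α) (r : ℕ)
    (y : Finset α → ℝ) :
    Matrix {S : Finset α // S ⊆ E ∧ S.card ≤ r} {S : Finset α // S ⊆ E ∧ S.card ≤ r} ℝ :=
  Matrix.of fun I J => y (I.1 ∪ J.1)

/-- The slack moment matrix `(∑_{e ∈ E} z e · y_{I∪J∪{e}} − y_{I∪J})`, indexed by the subsets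
`I, J ⊆ E` with `|I|, |J| ≤ r`. -/
def slackMatrixE {α : Type*} [Fintype α] [DecidableEq α] (E : Finset α) (r : ℕ)
    (y : Finset α → ℝ) (z : α → ℝ) :
    Matrix {S : Finset α // S ⊆ E ∧ S.card ≤ r} {S : Finset α // S ⊆ E ∧ S.card ≤ r} ℝ :=
  Matrix.of fun I J => (∑ e ∈ E, z e * y (insert e (I.1 ∪ J.1))) - y (I.1 ∪ J.1)

/-- The ambient vertex type for the directed `(2k−1)`-spanner instance built from a projection
games instance with left vertices `L`, right vertices `R` and alphabet `Sg`; `D` is the number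
of duplicate vertices (`D = k·K·|Σ|`) and `T` the number of internal vertices of each middle
path (`T = 2k−4`).  The five summands are: the label vertices `c_{i,σ}`, the duplicate vertices
`c_i^l`, the label vertices `x_{j,σ}`, the duplicate vertices `x_j^l`, and the middle-path
vertices `w_{i,j,σL,σR,t}`. -/
abbrev SpV (L R Sg : Type) (D T : ℕ) : Type :=
  (L × Sg) ⊕ (L × Fin D) ⊕ (R × Sg) ⊕ (R × Fin D) ⊕ (L × R × Sg × Sg × Fin T)

namespace SpV

variable {L R Sg : Type} {D T : ℕ}

/-- The label vertex `c_{i,σ}`. -/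
def cLab (i : L) (σ : Sg) : SpV L R Sg D T := Sum.inl (i, σ)

/-- The duplicate vertex `c_i^l`. -/
def cDup (i : L) (l : Fin D) : SpV L R Sg D T := Sum.inr (Sum.inl (i, l))

/-- The label vertex `x_{j,σ}`. -/
def xLab (j : R) (σ : Sg) : SpV L R Sg D T := Sum.inr (Sum.inr (Sum.inl (j, σ)))

/-- The duplicate vertex `x_j^l`. -/
def xDup (j : R) (l : Fin D) : SpV L R Sg D T :=
  Sum.inr (Sum.inr (Sum.inr (Sum.inl (j, l))))

/-- The middle-path vertex `w_{i,j,σL,σR,t}`. -/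
def mid (i : L) (j : R) (σL σR : Sg) (t : Fin T) : SpV L R Sg D T :=
  Sum.inr (Sum.inr (Sum.inr (Sum.inr (i, j, σL, σR, t))))

end SpV

set_option synthInstance.maxSize 1000 in
instance SpV.instDecidableEq {L R Sg : Type} [DecidableEq L] [DecidableEq R] [DecidableEq Sg]
    {D T : ℕ} : DecidableEq (SpV L R Sg D T) := inferInstance

instance SpV.instFintype {L R Sg : Type} [Fintype L] [Fintype R] [Fintype Sg] {D T : ℕ} :
    Fintype (SpV L R Sg D T) := inferInstance

namespace Spanner

/-- The number `k·K·|Σ|` of duplicate vertices per projection-games vertex. -/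
abbrev numDup (Sg : Type) [Fintype Sg] (k K : ℕ) : ℕ := k * K * Fintype.card Sg

/-- The vertex type of the directed spanner instance with parameters `k, K`. -/
abbrev Vt (L R Sg : Type) [Fintype Sg] (k K : ℕ) : Type :=
  SpV L R Sg (numDup Sg k K) (2 * k - 4)

/-- The edge set `E_L = {(c_i^l, c_{i,σ})}`. -/
def ELedges (L R Sg : Type) [Fintype L] [Fintype R] [Fintype Sg]
    [DecidableEq L] [DecidableEq R] [DecidableEq Sg] (k K : ℕ) :
    Finset (Vt L R Sg k K × Vt L R Sg k K) :=
  Finset.univ.image fun p : L × Fin (numDup Sg k K) × Sg =>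
    (SpV.cDup p.1 p.2.1, SpV.cLab p.1 p.2.2)

/-- The edge set `E_R = {(x_{j,σ}, x_j^l)}`. -/
def ERedges (L R Sg : Type) [Fintype L] [Fintype R] [Fintype Sg]
    [DecidableEq L] [DecidableEq R] [DecidableEq Sg] (k K : ℕ) :
    Finset (Vt L R Sg k K × Vt L R Sg k K) :=
  Finset.univ.image fun p : R × Fin (numDup Sg k K) × Sg =>
    (SpV.xLab p.1 p.2.2, SpV.xDup p.1 p.2.1)

/-- The edge set `E_LStars = {(c_{i,1}, c_{i,σ}), (c_{i,σ}, c_{i,1}) : σ ≠ 1}`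
(`σ0` plays the role of the fixed label `1 ∈ Σ`). -/
def ELStars (L R : Type) {Sg : Type} [Fintype L] [Fintype R] [Fintype Sg]
    [DecidableEq L] [DecidableEq R] [DecidableEq Sg] (σ0 : Sg) (k K : ℕ) :
    Finset (Vt L R Sg k K × Vt L R Sg k K) :=
  ((Finset.univ.filter fun p : L × Sg => p.2 ≠ σ0).image fun p =>
      (SpV.cLab p.1 σ0, SpV.cLab p.1 p.2)) ∪
  ((Finset.univ.filter fun p : L × Sg => p.2 ≠ σ0).image fun p =>
      (SpV.cLab p.1 p.2, SpV.cLab p.1 σ0))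

/-- The edge set `E_RStars = {(x_{j,1}, x_{j,σ}), (x_{j,σ}, x_{j,1}) : σ ≠ 1}`. -/
def ERStars (L R : Type) {Sg : Type} [Fintype L] [Fintype R] [Fintype Sg]
    [DecidableEq L] [DecidableEq R] [DecidableEq Sg] (σ0 : Sg) (k K : ℕ) :
    Finset (Vt L R Sg k K × Vt L R Sg k K) :=
  ((Finset.univ.filter fun p : R × Sg => p.2 ≠ σ0).image fun p =>
      (SpV.xLab p.1 σ0, SpV.xLab p.1 p.2)) ∪
  ((Finset.univ.filter fun p : R × Sg => p.2 ≠ σ0).image fun p =>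
      (SpV.xLab p.1 p.2, SpV.xLab p.1 σ0))

/-- The edge set `E_Outer = {(c_i^l, x_j^l) : {c_i, x_j} ∈ E_Proj, l ∈ [kK|Σ|]}`. -/
def EOuter {L R : Type} (Sg : Type) [Fintype L] [Fintype R] [Fintype Sg]
    [DecidableEq L] [DecidableEq R] [DecidableEq Sg]
    (Eproj : Finset (L × R)) (k K : ℕ) :
    Finset (Vt L R Sg k K × Vt L R Sg k K) :=
  (Eproj ×ˢ (Finset.univ : Finset (Fin (numDup Sg k K)))).image fun p =>
    (SpV.cDup p.1.1 p.2, SpV.xDup p.1.2 p.2)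

/-- The vertex sequence `c_{i,σL}, w_{i,j,σL,σR,1}, …, w_{i,j,σL,σR,2k−4}, x_{j,σR}` of the
middle path (for `k = 2` it is just `c_{i,σL}, x_{j,σR}`). -/
def midVerts {L R Sg : Type} [Fintype Sg] (k K : ℕ) (i : L) (j : R) (σL σR : Sg) :
    List (Vt L R Sg k K) :=
  (SpV.cLab i σL :: (List.finRange (2 * k - 4)).map fun t => SpV.mid i j σL σR t) ++
    [SpV.xLab j σR]

/-- The list of consecutive edges of a vertex sequence. -/
def pathEdges {V : Type*} (vs : List V) : List (V × V) := vs.zip vs.tail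

/-- The edge list `E_M^{i,j,σL,σR}` of the middle path from `c_{i,σL}` to `x_{j,σR}`. -/
def EMpath {L R Sg : Type} [Fintype Sg] (k K : ℕ) (i : L) (j : R) (σL σR : Sg) :
    List (Vt L R Sg k K × Vt L R Sg k K) :=
  pathEdges (midVerts k K i j σL σR)

/-- The edge set `E_M = ⋃_{ {c_i,x_j} ∈ E_Proj, (σL,σR) ∈ π_{i,j} } E_M^{i,j,σL,σR}`. -/
def EMedges {L R Sg : Type} [Fintype L] [Fintype R] [Fintype Sg]
    [DecidableEq L] [DecidableEq R] [DecidableEq Sg]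
    (Eproj : Finset (L × R)) (π : L → R → Sg → Sg) (k K : ℕ) :
    Finset (Vt L R Sg k K × Vt L R Sg k K) :=
  Eproj.biUnion fun e => (Finset.univ : Finset Sg).biUnion fun σL =>
    (EMpath k K e.1 e.2 σL (π e.1 e.2 σL)).toFinset

/-- The edge set `E = E_L ∪ E_LStars ∪ E_M ∪ E_RStars ∪ E_R ∪ E_Outer` of the directed
spanner instance. -/
def Edges {L R Sg : Type} [Fintype L] [Fintype R] [Fintype Sg]
    [DecidableEq L] [DecidableEq R] [DecidableEq Sg]
    (Eproj : Finset (L × R)) (π : L → R → Sg → Sg) (σ0 : Sg) (k K : ℕ) :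
    Finset (Vt L R Sg k K × Vt L R Sg k K) :=
  ELedges L R Sg k K ∪ ELStars L R σ0 k K ∪ EMedges Eproj π k K ∪
    ERStars L R σ0 k K ∪ ERedges L R Sg k K ∪ EOuter Sg Eproj k K

/-- The vertex set `V = L_Labels ∪ L_Dups ∪ R_Labels ∪ R_Dups ∪ M_Paths` of the directed
spanner instance. -/
def Verts {L R Sg : Type} [Fintype L] [Fintype R] [Fintype Sg]
    [DecidableEq L] [DecidableEq R] [DecidableEq Sg]
    (Eproj : Finset (L × R)) (π : L → R → Sg → Sg) (k K : ℕ) :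
    Finset (Vt L R Sg k K) :=
  (Finset.univ.image fun p : L × Sg => SpV.cLab p.1 p.2) ∪
  (Finset.univ.image fun p : L × Fin (numDup Sg k K) => SpV.cDup p.1 p.2) ∪
  (Finset.univ.image fun p : R × Sg => SpV.xLab p.1 p.2) ∪
  (Finset.univ.image fun p : R × Fin (numDup Sg k K) => SpV.xDup p.1 p.2) ∪
  (Eproj.biUnion fun e => (Finset.univ : Finset Sg).biUnion fun σL =>
    Finset.univ.image fun t : Fin (2 * k - 4) =>
      SpV.mid e.1 e.2 σL (π e.1 e.2 σL) t)

/-- The map `Φ` sending an edge of `E ∖ E_Outer` to the corresponding label set: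
`Φ((c_i^l, c_{i,σ})) = {(c_i, σ)}`, `Φ((x_{j,σ}, x_j^l)) = {(x_j, σ)}`, and `Φ(e) = ∅` for
`e ∈ E_LStars ∪ E_M ∪ E_RStars`. -/
def Phi {L R Sg : Type} [Fintype Sg] {k K : ℕ}
    (e : Vt L R Sg k K × Vt L R Sg k K) : Finset ((L ⊕ R) × Sg) :=
  match e with
  | (Sum.inr (Sum.inl _), Sum.inl (i, σ)) => {(Sum.inl i, σ)}
  | (Sum.inr (Sum.inr (Sum.inl (j, σ))), Sum.inr (Sum.inr (Sum.inr (Sum.inl _)))) =>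
      {(Sum.inr j, σ)}
  | _ => ∅

/-- The fractional solution `y'` built from a solution `y*` of the projection games SDP:
`y'_S = 0` if `S` contains an edge of `E_Outer`, and `y'_S = y*_{Φ(S)}` otherwise
(where `Φ(S) = ⋃_{e ∈ S} Φ(e)`). -/
def yPrime {L R Sg : Type} [Fintype L] [Fintype R] [Fintype Sg]
    [DecidableEq L] [DecidableEq R] [DecidableEq Sg]
    (Eproj : Finset (L × R)) (k K : ℕ) (ystar : Finset ((L ⊕ R) × Sg) → ℝ)
    (S : Finset (Vt L R Sg k K × Vt L R Sg k K)) : ℝ :=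
  if (S ∩ EOuter Sg Eproj k K).Nonempty then 0 else ystar (S.biUnion Phi)

end Spanner

/-! Give every vertex a height: `2k - 1` at `c_i^l`, `2k - 2` at `c_{i,σ}`, decreasing by one
along each middle path to `1` at `x_{j,σ}`, and `0` at `x_j^l`. The `c_i^l` have no incoming and
the `x_j^l` no outgoing edges. A path from `c_i^l` to `x_j^l` therefore either is the outer edge,
or starts with `(c_i^l, c_{i,σL})` and then has to descend from height `2k - 2` to `0` in at most
`2k - 2` steps. Since no edge out of a vertex other than a `c_i^l` lowers the height by more than
one, every step lowers it by exactly one, which rules out the star edges. The remaining edges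
leave `c_{i,σL}` into some middle path `E_M^{i,j',σL,π(σL)}`, follow it deterministically to
`x_{j',π(σL)}`, and end with an `E_R` edge, which lands at `x_j^l` only if `j' = j`. -/

namespace List

variable {α : Type*}

theorem IsChain.tail_imp {R S : α → α → Prop} {P : α → Prop} {a : α} {l : List α}
    (h : IsChain R (a :: l)) (hP : ∀ x y, R x y → P y) (hS : ∀ x y, P x → R x y → S x y) :
    IsChain S l := by
  rw [isChain_iff_getElem] at h ⊢
  intro i hi
  exact hS _ _ (hP _ _ (h i (by simp only [length_cons]; omega)))
    (h (i + 1) (by simp only [length_cons]; omega))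

theorem IsChain.nodup_of_anti {f : α → ℕ} {l : List α} (h : IsChain (fun a b => f b < f a) l) :
    l.Nodup :=
  Nodup.of_map f (((isChain_map f).2 h).pairwise.imp ne_of_gt)

variable {f : α → ℕ} {R : α → α → Prop}

theorem IsChain.le_add_length {a b : α} {l : List α}
    (h : IsChain (fun x y => f x ≤ f y + 1) (a :: l)) (hb : (a :: l).getLast? = some b) :
    f a ≤ f b + l.length := by
  induction l generalizing a with
  | nil => simp_all
  | cons c l ih =>
    rw [isChain_cons_cons] at h
    have := ih h.2 (by simpa using hb)
    simp only [length_cons]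
    omega

theorem IsChain.eq_add_one_of_add_length_le {a b : α} {l : List α}
    (h : IsChain (fun x y => R x y ∧ f x ≤ f y + 1) (a :: l))
    (hb : (a :: l).getLast? = some b) (hlen : f b + l.length ≤ f a) :
    IsChain (fun x y => R x y ∧ f x = f y + 1) (a :: l) := by
  induction l generalizing a with
  | nil => exact .singleton a
  | cons c l ih =>
    rw [isChain_cons_cons] at h ⊢
    have hb' : (c :: l).getLast? = some b := by simpa using hb
    have hc := (h.2.imp fun _ _ hxy => hxy.2).le_add_length hb'
    simp only [length_cons] at hlen
    exact ⟨⟨h.1.1, by omega⟩, ih h.2 hb' (by omega)⟩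

end List

namespace Spanner

section PathEdges

variable {V : Type*}

@[simp] theorem pathEdges_nil : pathEdges ([] : List V) = [] := rfl

@[simp] theorem pathEdges_singleton (a : V) : pathEdges [a] = [] := rfl

@[simp] theorem pathEdges_cons_cons (a b : V) (l : List V) :
    pathEdges (a :: b :: l) = (a, b) :: pathEdges (b :: l) := rfl

@[simp] theorem map_snd_pathEdges_cons (a : V) (l : List V) :
    (pathEdges (a :: l)).map Prod.snd = l := by
  induction l generalizing a with
  | nil => rfl
  | cons b l ih => simp [ih]

theorem length_pathEdges_cons (a : V) (l : List V) : (pathEdges (a :: l)).length = l.length := by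
  rw [← List.length_map Prod.snd, map_snd_pathEdges_cons]

theorem mem_pathEdges_iff {l : List V} {x y : V} :
    (x, y) ∈ pathEdges l ↔ ∃ m, ∃ h : m + 1 < l.length, x = l[m] ∧ y = l[m + 1] := by
  simp only [pathEdges, List.mem_iff_getElem, List.getElem_zip, List.getElem_tail,
    List.length_zip, List.length_tail, Prod.mk.injEq]
  exact ⟨fun ⟨m, h, hx, hy⟩ => ⟨m, by omega, hx.symm, hy.symm⟩,
    fun ⟨m, h, hx, hy⟩ => ⟨m, by omega, hx.symm, hy.symm⟩⟩

theorem isChain_iff_forall_mem_pathEdges {R : V → V → Prop} {l : List V} :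
    l.IsChain R ↔ ∀ e ∈ pathEdges l, R e.1 e.2 := by
  induction l with
  | nil => simp
  | cons a l ih => cases l <;> simp_all

theorem isChain_pathEdges (l : List V) : (pathEdges l).IsChain (fun e f => e.2 = f.1) := by
  induction l with
  | nil => simp
  | cons a l ih => rcases l with _ | ⟨b, _ | ⟨c, l⟩⟩ <;> simp_all

theorem eq_pathEdges_of_isChain {u : V} {p : List (V × V)}
    (hchain : p.IsChain (fun e f => e.2 = f.1)) (hhead : p.head?.map Prod.fst = some u) :
    p = pathEdges (u :: p.map Prod.snd) := by
  induction p generalizing u with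
  | nil => rfl
  | cons e p ih =>
    obtain rfl : e.1 = u := by simpa using hhead
    rcases p with _ | ⟨f, p⟩
    · rfl
    · rw [List.isChain_cons_cons] at hchain
      rw [List.map_cons, pathEdges_cons_cons, ← ih hchain.2 (by simp [hchain.1])]

theorem isDirPath_iff [DecidableEq V] {E : Finset (V × V)} {u v : V} {p : List (V × V)} :
    IsDirPath E u v p ↔ ∃ l : List V, p = pathEdges (u :: l) ∧ l.getLast? = some v ∧
      (u :: l).IsChain (fun a b => (a, b) ∈ E) ∧ (u :: l).Nodup := by
  constructor
  · rintro ⟨-, hE, hhead, hlast, hchain, hnodup⟩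
    have hp := eq_pathEdges_of_isChain hchain hhead
    refine ⟨p.map Prod.snd, hp, by rwa [List.getLast?_map], ?_, hnodup⟩
    exact isChain_iff_forall_mem_pathEdges.2 fun e he => hE e (hp ▸ he)
  · rintro ⟨l, rfl, hlast, hchain, hnodup⟩
    rcases l with _ | ⟨b, l⟩
    · simp at hlast
    refine ⟨by simp, fun e he => isChain_iff_forall_mem_pathEdges.1 hchain e he, by simp,
      ?_, isChain_pathEdges _, by rwa [map_snd_pathEdges_cons]⟩
    rw [← List.getLast?_map, map_snd_pathEdges_cons, hlast]

end PathEdges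

def height {L R Sg : Type} {D T : ℕ} : SpV L R Sg D T → ℕ
  | Sum.inl _ => T + 2
  | Sum.inr (Sum.inl _) => T + 3
  | Sum.inr (Sum.inr (Sum.inl _)) => 1
  | Sum.inr (Sum.inr (Sum.inr (Sum.inl _))) => 0
  | Sum.inr (Sum.inr (Sum.inr (Sum.inr (_, _, _, _, t)))) => T - t + 1

section Height

variable {L R Sg : Type} {D T : ℕ}

@[simp] theorem height_cLab (i : L) (σ : Sg) : height (SpV.cLab i σ : SpV L R Sg D T) = T + 2 :=
  rfl

@[simp] theorem height_cDup (i : L) (l : Fin D) : height (SpV.cDup i l : SpV L R Sg D T) = T + 3 :=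
  rfl

@[simp] theorem height_xLab (j : R) (σ : Sg) : height (SpV.xLab j σ : SpV L R Sg D T) = 1 := rfl

@[simp] theorem height_xDup (j : R) (l : Fin D) : height (SpV.xDup j l : SpV L R Sg D T) = 0 :=
  rfl

@[simp] theorem height_mid (i : L) (j : R) (σL σR : Sg) (t : Fin T) :
    height (SpV.mid i j σL σR t : SpV L R Sg D T) = T - t + 1 := rfl

end Height

section MidVerts

variable {L R Sg : Type} [Fintype Sg] {k K : ℕ} (i : L) (j : R) (σL σR : Sg)

@[simp] theorem length_midVerts : (midVerts k K i j σL σR).length = 2 * k - 4 + 2 := by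
  simp [midVerts]

theorem getLast?_midVerts : (midVerts k K i j σL σR).getLast? = some (SpV.xLab j σR) := by
  rw [midVerts, List.getLast?_concat]

theorem midVerts_getElem_zero (h : 0 < (midVerts k K i j σL σR).length) :
    (midVerts k K i j σL σR)[0] = SpV.cLab i σL := rfl

theorem midVerts_getElem_of_le {m : ℕ} (h₁ : 1 ≤ m) (h₂ : m ≤ 2 * k - 4)
    (h : m < (midVerts k K i j σL σR).length) :
    (midVerts k K i j σL σR)[m] = SpV.mid i j σL σR ⟨m - 1, by omega⟩ := by
  obtain ⟨m, rfl⟩ := Nat.exists_eq_add_of_le' h₁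
  simp [midVerts, List.getElem_append_left, show m < 2 * k - 4 by omega]

theorem midVerts_getElem_last (h : 2 * k - 4 + 1 < (midVerts k K i j σL σR).length) :
    (midVerts k K i j σL σR)[2 * k - 4 + 1] = SpV.xLab j σR := by
  simp [midVerts, List.getElem_append_right]

theorem height_midVerts_getElem {m : ℕ} (h : m < (midVerts k K i j σL σR).length) :
    height (midVerts k K i j σL σR)[m] = 2 * k - 4 + 2 - m := by
  rw [length_midVerts] at h
  rcases Nat.eq_zero_or_pos m with rfl | h₁
  · simp [midVerts_getElem_zero]
  rcases Nat.lt_or_ge (2 * k - 4) m with h₂ | h₂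
  · obtain rfl : m = 2 * k - 4 + 1 := by omega
    simp [midVerts_getElem_last]
  · simp only [midVerts_getElem_of_le i j σL σR h₁ h₂, height_mid]
    omega

end MidVerts

theorem height_of_mem_pathEdges_midVerts {L R Sg : Type} [Fintype Sg] {k K : ℕ} {i : L} {j : R}
    {σL σR : Sg} {x y : Vt L R Sg k K} (h : (x, y) ∈ pathEdges (midVerts k K i j σL σR)) :
    height x = height y + 1 ∧ 2 ≤ height x ∧ height x ≤ 2 * k - 4 + 2 := by
  obtain ⟨m, hm, rfl, rfl⟩ := mem_pathEdges_iff.1 h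
  simp only [length_midVerts] at hm
  simp only [height_midVerts_getElem]
  omega

section Edges

variable {L R Sg : Type} [Fintype L] [Fintype R] [Fintype Sg]
  [DecidableEq L] [DecidableEq R] [DecidableEq Sg]
  {Eproj : Finset (L × R)} {π : L → R → Sg → Sg} {σ0 : Sg} {k K : ℕ}

theorem cases_of_mem_Edges {x y : Vt L R Sg k K} (h : (x, y) ∈ Edges Eproj π σ0 k K) :
    (∃ i l σ, x = SpV.cDup i l ∧ y = SpV.cLab i σ) ∨
    (∃ i σ σ', x = SpV.cLab i σ ∧ y = SpV.cLab i σ') ∨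
    (∃ i j σL, (x, y) ∈ pathEdges (midVerts k K i j σL (π i j σL))) ∨
    (∃ j σ σ', x = SpV.xLab j σ ∧ y = SpV.xLab j σ') ∨
    (∃ j l σ, x = SpV.xLab j σ ∧ y = SpV.xDup j l) ∨
    (∃ i j l, x = SpV.cDup i l ∧ y = SpV.xDup j l) := by
  simp only [Edges, ELedges, ELStars, EMedges, EMpath, ERStars, ERedges, EOuter, ne_eq,
    union_assoc, mem_union, mem_image, mem_univ, Prod.mk.injEq, true_and, Prod.exists,
    exists_and_left, exists_and_right, mem_filter, mem_biUnion, List.mem_toFinset, mem_product,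
    and_true] at h
  rcases h with ⟨i, ⟨l, rfl⟩, σ, rfl⟩ | ⟨i, σ, -, rfl, rfl⟩ | ⟨i, σ, -, rfl, rfl⟩ |
    ⟨i, j, -, σL, hmid⟩ | ⟨j, σ, -, rfl, rfl⟩ | ⟨j, σ, -, rfl, rfl⟩ |
    ⟨j, ⟨σ, rfl⟩, l, rfl⟩ | ⟨i, j, -, l, rfl, rfl⟩
  exacts [.inl ⟨i, l, σ, rfl, rfl⟩, .inr <| .inl ⟨i, σ0, σ, rfl, rfl⟩,
    .inr <| .inl ⟨i, σ, σ0, rfl, rfl⟩, .inr <| .inr <| .inl ⟨i, j, σL, hmid⟩,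
    .inr <| .inr <| .inr <| .inl ⟨j, σ0, σ, rfl, rfl⟩,
    .inr <| .inr <| .inr <| .inl ⟨j, σ, σ0, rfl, rfl⟩,
    .inr <| .inr <| .inr <| .inr <| .inl ⟨j, l, σ, rfl, rfl⟩,
    .inr <| .inr <| .inr <| .inr <| .inr ⟨i, j, l, rfl, rfl⟩]

theorem one_le_height_fst {x y : Vt L R Sg k K} (h : (x, y) ∈ Edges Eproj π σ0 k K) :
    1 ≤ height x := by
  rcases cases_of_mem_Edges h with ⟨_, _, _, rfl, rfl⟩ | ⟨_, _, _, rfl, rfl⟩ | ⟨_, _, _, hmid⟩ |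
    ⟨_, _, _, rfl, rfl⟩ | ⟨_, _, _, rfl, rfl⟩ | ⟨_, _, _, rfl, rfl⟩
  case inr.inr.inl => have := height_of_mem_pathEdges_midVerts hmid; omega
  all_goals simp

theorem height_snd_le {x y : Vt L R Sg k K} (h : (x, y) ∈ Edges Eproj π σ0 k K) :
    height y ≤ 2 * k - 4 + 2 := by
  rcases cases_of_mem_Edges h with ⟨_, _, _, rfl, rfl⟩ | ⟨_, _, _, rfl, rfl⟩ | ⟨_, _, _, hmid⟩ |
    ⟨_, _, _, rfl, rfl⟩ | ⟨_, _, _, rfl, rfl⟩ | ⟨_, _, _, rfl, rfl⟩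
  case inr.inr.inl => have := height_of_mem_pathEdges_midVerts hmid; omega
  all_goals simp

theorem height_fst_le_height_snd_add_one {x y : Vt L R Sg k K}
    (h : (x, y) ∈ Edges Eproj π σ0 k K) (hx : height x ≤ 2 * k - 4 + 2) :
    height x ≤ height y + 1 := by
  rcases cases_of_mem_Edges h with ⟨_, _, _, rfl, rfl⟩ | ⟨_, _, _, rfl, rfl⟩ | ⟨_, _, _, hmid⟩ |
    ⟨_, _, _, rfl, rfl⟩ | ⟨_, _, _, rfl, rfl⟩ | ⟨_, _, _, rfl, rfl⟩
  case inr.inr.inl => have := height_of_mem_pathEdges_midVerts hmid; omega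
  all_goals simp at hx ⊢

theorem eq_cLab_or_eq_xDup_of_cDup_mem_Edges {i : L} {l : Fin (numDup Sg k K)} {y : Vt L R Sg k K}
    (h : (SpV.cDup i l, y) ∈ Edges Eproj π σ0 k K) :
    (∃ σ, y = SpV.cLab i σ) ∨ ∃ j, y = SpV.xDup j l := by
  rcases cases_of_mem_Edges h with ⟨_, _, σ, hx, rfl⟩ | ⟨_, _, _, hx, rfl⟩ | ⟨_, _, _, hmid⟩ |
    ⟨_, _, _, hx, rfl⟩ | ⟨_, _, _, hx, rfl⟩ | ⟨_, j, _, hx, rfl⟩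
  · simp only [SpV.cDup, Sum.inr.injEq, Sum.inl.injEq, Prod.mk.injEq] at hx
    exact .inl ⟨σ, by rw [hx.1]⟩
  · simpa using congrArg height hx
  · have := height_of_mem_pathEdges_midVerts hmid
    simp at this
  · simpa using congrArg height hx
  · simpa using congrArg height hx
  · simp only [SpV.cDup, Sum.inr.injEq, Sum.inl.injEq, Prod.mk.injEq] at hx
    exact .inr ⟨j, by rw [hx.2]⟩

theorem exists_eq_midVerts_getElem_one_of_cLab_mem_Edges {i : L} {σ : Sg} {y : Vt L R Sg k K}
    (h : (SpV.cLab i σ, y) ∈ Edges Eproj π σ0 k K)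
    (hy : height (SpV.cLab i σ : Vt L R Sg k K) = height y + 1) :
    ∃ j, y = (midVerts k K i j σ (π i j σ))[1]'(by simp) := by
  rcases cases_of_mem_Edges h with ⟨_, _, _, hx, rfl⟩ | ⟨_, _, _, hx, rfl⟩ | ⟨i', j, σL, hmid⟩ |
    ⟨_, _, _, hx, rfl⟩ | ⟨_, _, _, hx, rfl⟩ | ⟨_, _, _, hx, rfl⟩
  · simpa using congrArg height hx
  · simp at hy
  · obtain ⟨m, hm, hx, rfl⟩ := mem_pathEdges_iff.1 hmid
    have hm0 : m = 0 := by
      have := congrArg height hx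
      simp only [height_cLab, height_midVerts_getElem] at this
      simp only [length_midVerts] at hm
      omega
    subst hm0
    simp only [midVerts_getElem_zero, SpV.cLab, Sum.inl.injEq, Prod.mk.injEq] at hx
    obtain ⟨rfl, rfl⟩ := hx
    exact ⟨j, rfl⟩
  · simpa using congrArg height hx
  · simpa using congrArg height hx
  · simpa using congrArg height hx

theorem exists_eq_xDup_of_xLab_mem_Edges {j : R} {σ : Sg} {y : Vt L R Sg k K}
    (h : (SpV.xLab j σ, y) ∈ Edges Eproj π σ0 k K)
    (hy : height (SpV.xLab j σ : Vt L R Sg k K) = height y + 1) :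
    ∃ l, y = SpV.xDup j l := by
  rcases cases_of_mem_Edges h with ⟨_, _, _, hx, rfl⟩ | ⟨_, _, _, hx, rfl⟩ | ⟨_, _, _, hmid⟩ |
    ⟨_, _, _, hx, rfl⟩ | ⟨_, l, _, hx, rfl⟩ | ⟨_, _, _, hx, rfl⟩
  · simpa using congrArg height hx
  · simpa using congrArg height hx
  · have := height_of_mem_pathEdges_midVerts hmid
    simp at this
  · simp at hy
  · simp only [SpV.xLab, Sum.inr.injEq, Sum.inl.injEq, Prod.mk.injEq] at hx
    exact ⟨l, by rw [hx.1]⟩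
  · simpa using congrArg height hx

theorem eq_midVerts_getElem_succ_of_mem_Edges {i : L} {j : R} {σL σR : Sg} {m : ℕ}
    {y : Vt L R Sg k K} (hm₀ : 1 ≤ m)
    (hm : m + 1 < (midVerts k K i j σL σR).length)
    (h : ((midVerts k K i j σL σR)[m], y) ∈ Edges Eproj π σ0 k K) :
    y = (midVerts k K i j σL σR)[m + 1] := by
  have hheight := height_midVerts_getElem i j σL σR (Nat.lt_of_succ_lt hm)
  simp only [length_midVerts] at hm
  rcases cases_of_mem_Edges h with ⟨_, _, _, hx, rfl⟩ | ⟨_, _, _, hx, rfl⟩ | ⟨i', j', σL', hmid⟩ |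
    ⟨_, _, _, hx, rfl⟩ | ⟨_, _, _, hx, rfl⟩ | ⟨_, _, _, hx, rfl⟩
  case inr.inr.inl =>
    obtain ⟨m', hm', hx, rfl⟩ := mem_pathEdges_iff.1 hmid
    obtain rfl : m' = m := by
      have := congrArg height hx
      simp only [height_midVerts_getElem, length_midVerts] at this hm' hheight
      omega
    have hmid := hx.symm
    rw [midVerts_getElem_of_le _ _ _ _ hm₀ (by omega),
      midVerts_getElem_of_le _ _ _ _ hm₀ (by omega)] at hmid
    simp only [SpV.mid, Sum.inr.injEq, Prod.mk.injEq] at hmid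
    obtain ⟨rfl, rfl, rfl, rfl, -⟩ := hmid
    rfl
  all_goals
    have := congrArg height hx
    simp at this
    omega

theorem eq_nil_of_isChain_xDup {j : R} {l : Fin (numDup Sg k K)} {rest : List (Vt L R Sg k K)}
    (h : (SpV.xDup j l :: rest).IsChain (fun a b => (a, b) ∈ Edges Eproj π σ0 k K)) :
    rest = [] := by
  rcases rest with _ | ⟨y, rest⟩
  · rfl
  · simpa using one_le_height_fst (List.isChain_cons_cons.1 h).1

theorem cons_eq_drop_midVerts_of_isChain {i : L} {j j' : R} {σL σR : Sg}
    {l : Fin (numDup Sg k K)} {m : ℕ} (hm₀ : 1 ≤ m) (hm : m < (midVerts k K i j σL σR).length)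
    {rest : List (Vt L R Sg k K)}
    (hchain : ((midVerts k K i j σL σR)[m] :: rest).IsChain
      (fun a b => (a, b) ∈ Edges Eproj π σ0 k K ∧ height a = height b + 1))
    (hlast : ((midVerts k K i j σL σR)[m] :: rest).getLast? = some (SpV.xDup j' l)) :
    j' = j ∧ (midVerts k K i j σL σR)[m] :: rest =
      (midVerts k K i j σL σR).drop m ++ [SpV.xDup j l] := by
  induction rest generalizing m with
  | nil =>
    have := congrArg height (Option.some.inj hlast)
    rw [List.getLast_singleton, height_midVerts_getElem, height_xDup] at this
    rw [length_midVerts] at hm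
    omega
  | cons y rest ih =>
    rw [List.isChain_cons_cons] at hchain
    obtain ⟨⟨hy, hheight⟩, hrest⟩ := hchain
    rw [List.getLast?_cons_cons] at hlast
    by_cases hm' : m + 1 < (midVerts k K i j σL σR).length
    · obtain rfl := eq_midVerts_getElem_succ_of_mem_Edges hm₀ hm' hy
      obtain ⟨rfl, heq⟩ := ih (by omega) hm' hrest hlast
      rw [heq, List.drop_eq_getElem_cons hm, List.cons_append]
      exact ⟨rfl, rfl⟩
    · have hxLab : (midVerts k K i j σL σR)[m] = SpV.xLab j σR := by
        obtain rfl : m = 2 * k - 4 + 1 := by simp only [length_midVerts] at hm hm'; omega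
        exact midVerts_getElem_last i j σL σR hm
      rw [hxLab] at hy hheight
      obtain ⟨l', rfl⟩ := exists_eq_xDup_of_xLab_mem_Edges hy hheight
      obtain rfl := eq_nil_of_isChain_xDup (hrest.imp fun _ _ h => h.1)
      simp only [List.getLast?_singleton, Option.some.injEq, SpV.xDup, Sum.inr.injEq,
        Sum.inl.injEq, Prod.mk.injEq] at hlast
      obtain ⟨rfl, rfl⟩ := hlast
      rw [List.drop_eq_getElem_cons hm, List.drop_of_length_le (by omega)]
      exact ⟨rfl, rfl⟩

theorem eq_singleton_or_eq_midVerts_append_of_isChain (hk : 2 ≤ k) {i : L} {j : R}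
    {l : Fin (numDup Sg k K)} {ws : List (Vt L R Sg k K)}
    (hchain : (SpV.cDup i l :: ws).IsChain (fun a b => (a, b) ∈ Edges Eproj π σ0 k K))
    (hlast : ws.getLast? = some (SpV.xDup j l)) (hlen : ws.length ≤ 2 * k - 1) :
    ws = [SpV.xDup j l] ∨ ∃ σL, ws = midVerts k K i j σL (π i j σL) ++ [SpV.xDup j l] := by
  rcases ws with _ | ⟨y, ws⟩
  · simp at hlast
  have hdesc : (y :: ws).IsChain
      (fun a b => (a, b) ∈ Edges Eproj π σ0 k K ∧ height a ≤ height b + 1) :=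
    hchain.tail_imp (P := fun a => height a ≤ 2 * k - 4 + 2) (fun _ _ => height_snd_le)
      fun _ _ ha hab => ⟨hab, height_fst_le_height_snd_add_one hab ha⟩
  rw [List.isChain_cons_cons] at hchain
  rcases eq_cLab_or_eq_xDup_of_cDup_mem_Edges hchain.1 with ⟨σL, rfl⟩ | ⟨j', rfl⟩
  · right
    refine ⟨σL, ?_⟩
    -- from height `2k - 2` down to `0` in at most `2k - 2` steps: every step drops the height,
    -- so no star edge occurs
    replace hdesc := hdesc.eq_add_one_of_add_length_le hlast
      (by simp only [List.length_cons, height_xDup, height_cLab] at hlen ⊢; omega)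
    rcases ws with _ | ⟨z, ws⟩
    · simpa using congrArg height (Option.some.inj hlast)
    rw [List.isChain_cons_cons] at hdesc
    obtain ⟨j', rfl⟩ := exists_eq_midVerts_getElem_one_of_cLab_mem_Edges hdesc.1.1 hdesc.1.2
    obtain ⟨rfl, heq⟩ := cons_eq_drop_midVerts_of_isChain le_rfl (by simp) hdesc.2
      (by simpa using hlast)
    rw [heq]
    rfl
  · left
    obtain rfl := eq_nil_of_isChain_xDup hchain.2
    simp_all [SpV.xDup]

theorem cDup_cLab_mem_Edges (i : L) (l : Fin (numDup Sg k K)) (σ : Sg) :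
    (SpV.cDup i l, SpV.cLab i σ) ∈ Edges Eproj π σ0 k K := by
  simp only [Edges, Finset.mem_union]
  exact .inl <| .inl <| .inl <| .inl <| .inl <|
    Finset.mem_image_of_mem _ (Finset.mem_univ (i, l, σ))

theorem xLab_xDup_mem_Edges (j : R) (σ : Sg) (l : Fin (numDup Sg k K)) :
    (SpV.xLab j σ, SpV.xDup j l) ∈ Edges Eproj π σ0 k K := by
  simp only [Edges, Finset.mem_union]
  exact .inl <| .inr <| Finset.mem_image_of_mem _ (Finset.mem_univ (j, l, σ))

theorem cDup_xDup_mem_Edges {i : L} {j : R} (hij : (i, j) ∈ Eproj) (l : Fin (numDup Sg k K)) :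
    (SpV.cDup i l, SpV.xDup j l) ∈ Edges Eproj π σ0 k K := by
  simp only [Edges, EOuter, Finset.mem_union]
  exact .inr <| Finset.mem_image.2 ⟨((i, j), l), Finset.mem_product.2 ⟨hij, Finset.mem_univ l⟩, rfl⟩

theorem mem_Edges_of_mem_pathEdges_midVerts {i : L} {j : R} (hij : (i, j) ∈ Eproj) {σL : Sg}
    {e : Vt L R Sg k K × Vt L R Sg k K} (he : e ∈ pathEdges (midVerts k K i j σL (π i j σL))) :
    e ∈ Edges Eproj π σ0 k K := by
  simp only [Edges, EMedges, EMpath, Finset.mem_union, Finset.mem_biUnion, List.mem_toFinset]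
  exact .inl <| .inl <| .inl <| .inr ⟨(i, j), hij, σL, Finset.mem_univ _, he⟩

theorem isChain_cDup_midVerts_xDup {i : L} {j : R} (hij : (i, j) ∈ Eproj) (l : Fin (numDup Sg k K))
    (σL : Sg) :
    (SpV.cDup i l :: midVerts k K i j σL (π i j σL) ++ [SpV.xDup j l]).IsChain
      (fun a b => (a, b) ∈ Edges Eproj π σ0 k K ∧ height a = height b + 1) := by
  have hmid : (midVerts k K i j σL (π i j σL)).IsChain
      (fun a b => (a, b) ∈ Edges Eproj π σ0 k K ∧ height a = height b + 1) :=
    isChain_iff_forall_mem_pathEdges.2 fun _ he =>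
      ⟨mem_Edges_of_mem_pathEdges_midVerts hij he, (height_of_mem_pathEdges_midVerts he).1⟩
  refine List.isChain_cons.2 ⟨?_, hmid.append (.singleton _) ?_⟩
  · simp [midVerts, cDup_cLab_mem_Edges]
  · simp [getLast?_midVerts, xLab_xDup_mem_Edges]

theorem isDirPath_cDup_midVerts_xDup (hk : 2 ≤ k) {i : L} {j : R} (hij : (i, j) ∈ Eproj)
    (l : Fin (numDup Sg k K)) (σL : Sg) :
    IsDirPath (Edges Eproj π σ0 k K) (SpV.cDup i l) (SpV.xDup j l)
        (pathEdges (SpV.cDup i l :: midVerts k K i j σL (π i j σL) ++ [SpV.xDup j l])) ∧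
      (pathEdges (SpV.cDup i l :: midVerts k K i j σL (π i j σL) ++ [SpV.xDup j l])).length ≤
        2 * k - 1 := by
  have hchain := isChain_cDup_midVerts_xDup (π := π) (σ0 := σ0) hij l σL
  refine ⟨isDirPath_iff.2 ⟨_, rfl, by simp, hchain.imp fun _ _ h => h.1, ?_⟩, ?_⟩
  · exact (hchain.imp (S := fun a b => height b < height a) fun _ _ h => by omega).nodup_of_anti
  · rw [List.cons_append, length_pathEdges_cons, List.length_append, length_midVerts,
      List.length_singleton]
    omega

end Edges

end Spanner

open Spanner

theorem directed_spanner_path_characterization_general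
    {L R Sg : Type} [Fintype L] [Fintype R] [Fintype Sg]
    [DecidableEq L] [DecidableEq R] [DecidableEq Sg]
    (Eproj : Finset (L × R)) (π : L → R → Sg → Sg) (σ0 : Sg) (k K : ℕ)
    (hk : 2 ≤ k) :
    ∀ (i : L) (j : R), (i, j) ∈ Eproj → ∀ l : Fin (Spanner.numDup Sg k K),
      ∀ p : List (Spanner.Vt L R Sg k K × Spanner.Vt L R Sg k K),
        (IsDirPath (Spanner.Edges Eproj π σ0 k K) (SpV.cDup i l) (SpV.xDup j l) p ∧
            p.length ≤ 2 * k - 1) ↔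
          (p = [(SpV.cDup i l, SpV.xDup j l)] ∨
            ∃ σL : Sg, p = Spanner.pathEdges
              (SpV.cDup i l :: Spanner.midVerts k K i j σL (π i j σL) ++ [SpV.xDup j l])) := by
  intro i j hij l p
  constructor
  · rintro ⟨hp, hlen⟩
    obtain ⟨ws, rfl, hlast, hchain, -⟩ := isDirPath_iff.1 hp
    rw [length_pathEdges_cons] at hlen
    rcases eq_singleton_or_eq_midVerts_append_of_isChain hk hchain hlast hlen with rfl | ⟨σL, rfl⟩
    exacts [.inl rfl, .inr ⟨σL, rfl⟩]
  · rintro (rfl | ⟨σL, rfl⟩)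
    · refine ⟨isDirPath_iff.2 ⟨[SpV.xDup j l], rfl, rfl, ?_, ?_⟩, ?_⟩
      · exact List.isChain_pair.2 (cDup_xDup_mem_Edges hij l)
      · simp [SpV.cDup, SpV.xDup]
      · rw [List.length_singleton]
        omega
    · exact isDirPath_cDup_midVerts_xDup hk hij l σL

/-- Claim `path`.  In the directed spanner instance `G = (V,E)` built (with
parameters `k ≥ 2`, `K ≥ 1`) from a projection games instance in which every left vertex has
degree exactly `K`, for every `{c_i, x_j} ∈ E_Proj` and `l ∈ [kK|Σ|]`, the directed paths from
`c_i^l` to `x_j^l` with at most `2k−1` edges are exactly: (a) the single outer edge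
`(c_i^l, x_j^l)`, and (b) for each `(σL, σR) ∈ π_{i,j}` the `(2k−1)`-edge path consisting of
`(c_i^l, c_{i,σL})`, the middle path `E_M^{i,j,σL,σR}`, and `(x_{j,σR}, x_j^l)`. -/
theorem directed_spanner_path_characterization
    {L R Sg : Type} [Fintype L] [Fintype R] [Fintype Sg]
    [DecidableEq L] [DecidableEq R] [DecidableEq Sg]
    (Eproj : Finset (L × R)) (π : L → R → Sg → Sg) (σ0 : Sg) (k K : ℕ)
    (hk : 2 ≤ k) (hK : 1 ≤ K)
    (hdeg : ∀ i : L, (Eproj.filter fun e => e.1 = i).card = K) :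
    ∀ (i : L) (j : R), (i, j) ∈ Eproj → ∀ l : Fin (Spanner.numDup Sg k K),
      ∀ p : List (Spanner.Vt L R Sg k K × Spanner.Vt L R Sg k K),
        (IsDirPath (Spanner.Edges Eproj π σ0 k K) (SpV.cDup i l) (SpV.xDup j l) p ∧
            p.length ≤ 2 * k - 1) ↔
          (p = [(SpV.cDup i l, SpV.xDup j l)] ∨
            ∃ σL : Sg, p = Spanner.pathEdges
              (SpV.cDup i l :: Spanner.midVerts k K i j σL (π i j σL) ++ [SpV.xDup j l])) :=
  directed_spanner_path_characterization_general Eproj π σ0 k K hk
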